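/- arXiv:1510.06684 — 3 statements merged into one kernel-verified Lean document; each statement's English description precedes it below -/
import Mathlib

section
/- Let n ≥ 1, x_1,…,x_n ∈ ℝ^d, λ > 0, and for each i let ℓ_i : ℝ → ℝ be convex, differentiable and L̃_i-smooth. Define P(w) = (1/n)∑_{i=1}^n ℓ_i(⟨x_i, w⟩) + (λ/2)‖w‖². Let w* be a minimizer of P. Then for every w ∈ ℝ^d, (1/n) ∑_{i=1}^n (1/L̃_i) (ℓ_i'(⟨x_i,w⟩) - ℓ_i'(⟨x_i,w*⟩))² ≤ 2 (P(w) - P(w*) - (λ/2)‖w - w*‖²). -/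
open Finset

lemma tangent_aux (f : ℝ → ℝ) (hc : ConvexOn ℝ Set.univ f) (hd : Differentiable ℝ f)
    (a b : ℝ) : f a + deriv f a * (b - a) ≤ f b := by
  rcases lt_trichotomy a b with h | h | h
  · have h1 := hc.deriv_le_slope (Set.mem_univ a) (Set.mem_univ b) h (hd a)
    rw [slope_def_field, le_div_iff₀ (by linarith)] at h1
    linarith
  · subst h; simp
  · have h1 := hc.slope_le_deriv (Set.mem_univ b) (Set.mem_univ a) h (hd a)
    rw [slope_def_field, div_le_iff₀ (by linarith)] at h1
    nlinarith [h1]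

lemma descent_aux (f : ℝ → ℝ) (L : ℝ) (hL : 0 ≤ L) (hd : Differentiable ℝ f)
    (hlip : ∀ z w, |deriv f z - deriv f w| ≤ L * |z - w|) (a b : ℝ) :
    f b ≤ f a + deriv f a * (b - a) + L / 2 * (b - a) ^ 2 := by
  set c := b - a with hc
  set φ : ℝ → ℝ := fun t => f (a + t * c) - deriv f a * (t * c) - L / 2 * t ^ 2 * c ^ 2 with hφ
  have hder : ∀ t : ℝ,
      HasDerivAt φ (deriv f (a + t * c) * c - deriv f a * c - L * t * c ^ 2) t := by
    intro t
    have h1 : HasDerivAt (fun t : ℝ => a + t * c) c t := by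
      simpa using ((hasDerivAt_id t).mul_const c).const_add a
    have h2 : HasDerivAt (fun t : ℝ => f (a + t * c)) (deriv f (a + t * c) * c) t :=
      ((hd (a + t * c)).hasDerivAt).comp t h1
    have h3 : HasDerivAt (fun t : ℝ => deriv f a * (t * c)) (deriv f a * c) t := by
      simpa using ((hasDerivAt_id t).mul_const c).const_mul (deriv f a)
    have h4 : HasDerivAt (fun t : ℝ => L / 2 * t ^ 2 * c ^ 2) (L * t * c ^ 2) t := by
      have := ((hasDerivAt_pow 2 t).const_mul (L / 2)).mul_const (c ^ 2)
      exact this.congr_deriv (by push_cast; ring)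
    exact (h2.sub h3).sub h4
  have hdiffφ : Differentiable ℝ φ := fun t => (hder t).differentiableAt
  have hmono : AntitoneOn φ (Set.Icc 0 1) := by
    apply antitoneOn_of_deriv_nonpos (convex_Icc 0 1)
      hdiffφ.continuous.continuousOn hdiffφ.differentiableOn
    intro t ht
    rw [interior_Icc] at ht
    rw [(hder t).deriv]
    have h5 := hlip (a + t * c) a
    have h6 : |a + t * c - a| = t * |c| := by
      rw [show a + t * c - a = t * c by ring, abs_mul, abs_of_pos ht.1]
    rw [h6] at h5
    have h7 : (deriv f (a + t * c) - deriv f a) * c ≤ L * t * c ^ 2 := by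
      calc (deriv f (a + t * c) - deriv f a) * c
          ≤ |deriv f (a + t * c) - deriv f a| * |c| := by
            rw [← abs_mul]; exact le_abs_self _
        _ ≤ L * (t * |c|) * |c| := by
            apply mul_le_mul_of_nonneg_right h5 (abs_nonneg c)
        _ = L * t * c ^ 2 := by rw [← sq_abs]; ring
    linarith
  have := hmono (Set.mem_Icc.2 ⟨le_refl 0, zero_le_one⟩) (Set.mem_Icc.2 ⟨zero_le_one, le_refl 1⟩) zero_le_one
  have h0 : φ 0 = f a := by simp [hφ]
  have h1 : φ 1 = f b - deriv f a * c - L / 2 * c ^ 2 := by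
    simp only [hφ]
    rw [show a + 1 * c = b by rw [hc]; ring]
    ring
  rw [h0, h1] at this
  nlinarith [this]

lemma key1d (f : ℝ → ℝ) (L : ℝ) (hL : 0 < L) (hc : ConvexOn ℝ Set.univ f)
    (hd : Differentiable ℝ f) (hlip : ∀ z w, |deriv f z - deriv f w| ≤ L * |z - w|) (a b : ℝ) :
    (1 / L) * (deriv f b - deriv f a) ^ 2 ≤ 2 * (f b - f a - deriv f a * (b - a)) := by
  set s := (deriv f b - deriv f a) / L with hsdef
  have hs : s * L = deriv f b - deriv f a := div_mul_cancel₀ _ hL.ne'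
  have h1 := descent_aux f L hL.le hd hlip b (b - s)
  have h2 := tangent_aux f hc hd a (b - s)
  have key : (deriv f b - deriv f a) ^ 2 ≤ 2 * L * (f b - f a - deriv f a * (b - a)) := by
    nlinarith [h1, h2, hs, hL, sq_nonneg s, mul_nonneg hL.le (sq_nonneg s)]
  rw [div_mul_eq_mul_div, div_le_iff₀ hL]
  calc (1 : ℝ) * (deriv f b - deriv f a) ^ 2 = (deriv f b - deriv f a) ^ 2 := by ring
    _ ≤ 2 * L * (f b - f a - deriv f a * (b - a)) := key
    _ = 2 * (f b - f a - deriv f a * (b - a)) * L := by ring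
theorem stmt4 (n d : ℕ) (hn : 1 ≤ n) (x : Fin n → EuclideanSpace ℝ (Fin d))
    (lam : ℝ) (hlam : 0 < lam) (ℓ : Fin n → ℝ → ℝ) (Lt : Fin n → ℝ)
    (hLt : ∀ i, 0 < Lt i)
    (hconv : ∀ i, ConvexOn ℝ Set.univ (ℓ i)) (hdiff : ∀ i, Differentiable ℝ (ℓ i))
    (hlip : ∀ i z w, |deriv (ℓ i) z - deriv (ℓ i) w| ≤ Lt i * |z - w|)
    (P : EuclideanSpace ℝ (Fin d) → ℝ)
    (hP : ∀ w, P w = (1 / n) * ∑ i, ℓ i (inner ℝ (x i) w : ℝ) + lam / 2 * ‖w‖ ^ 2)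
    (ws : EuclideanSpace ℝ (Fin d)) (hmin : ∀ w, P ws ≤ P w) :
    ∀ w, (1 / n) * ∑ i, (1 / Lt i) *
        (deriv (ℓ i) (inner ℝ (x i) w : ℝ) - deriv (ℓ i) (inner ℝ (x i) ws : ℝ)) ^ 2
      ≤ 2 * (P w - P ws - lam / 2 * ‖w - ws‖ ^ 2) := by
  intro w
  set v : EuclideanSpace ℝ (Fin d) := w - ws with hv
  set a : Fin n → ℝ := fun i => (inner ℝ (x i) ws : ℝ) with ha
  set b : Fin n → ℝ := fun i => (inner ℝ (x i) v : ℝ) with hb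
  have hwv : ws + v = w := by rw [hv]; abel
  have hab : ∀ i, (inner ℝ (x i) w : ℝ) = a i + b i := by
    intro i
    show (inner ℝ (x i) w : ℝ) = (inner ℝ (x i) ws : ℝ) + (inner ℝ (x i) (w - ws) : ℝ)
    rw [inner_sub_right]
    ring
  -- the one-dimensional function g
  set g : ℝ → ℝ := fun t => P (ws + t • v) with hg
  have hgt : ∀ t, g t = (1 / n) * ∑ i, ℓ i (a i + t * b i)
      + lam / 2 * (‖ws‖ ^ 2 + 2 * (inner ℝ ws v : ℝ) * t + ‖v‖ ^ 2 * t ^ 2) := by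
    intro t
    show P (ws + t • v) = _
    rw [hP]
    congr 1
    · congr 1
      apply Finset.sum_congr rfl
      intro i _
      congr 1
      rw [inner_add_right, real_inner_smul_right]
    · congr 1
      rw [norm_add_sq_real, real_inner_smul_right, norm_smul]
      simp [mul_pow, abs_sq]
      ring
  -- derivative of g at 0
  have hsum : HasDerivAt (fun t : ℝ => ∑ i, ℓ i (a i + t * b i))
      (∑ i, deriv (ℓ i) (a i) * b i) 0 := by
    apply HasDerivAt.fun_sum
    intro i _
    have h1 : HasDerivAt (fun t : ℝ => a i + t * b i) (b i) 0 := by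
      simpa using ((hasDerivAt_id (0 : ℝ)).mul_const (b i)).const_add (a i)
    have h2 := ((hdiff i) (a i + 0 * b i)).hasDerivAt.comp 0 h1
    simpa [Function.comp_def] using h2
  have hq : HasDerivAt (fun t : ℝ => ‖ws‖ ^ 2 + 2 * (inner ℝ ws v : ℝ) * t + ‖v‖ ^ 2 * t ^ 2)
      (2 * (inner ℝ ws v : ℝ)) 0 := by
    have h1 : HasDerivAt (fun t : ℝ => ‖ws‖ ^ 2 + 2 * (inner ℝ ws v : ℝ) * t)
        (2 * (inner ℝ ws v : ℝ)) 0 := by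
      simpa using (((hasDerivAt_id (0 : ℝ)).const_mul (2 * (inner ℝ ws v : ℝ))).const_add (‖ws‖ ^ 2))
    have h2 : HasDerivAt (fun t : ℝ => ‖v‖ ^ 2 * t ^ 2) 0 0 := by
      simpa using (hasDerivAt_pow 2 (0 : ℝ)).const_mul (‖v‖ ^ 2)
    simpa using h1.fun_add h2
  have hgd : HasDerivAt g ((1 / n) * ∑ i, deriv (ℓ i) (a i) * b i + lam * (inner ℝ ws v : ℝ)) 0 := by
    have h3 := (hsum.const_mul ((1 : ℝ) / n)).add (hq.const_mul (lam / 2))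
    have h4 : (1 / (n : ℝ)) * ∑ i, deriv (ℓ i) (a i) * b i + lam / 2 * (2 * (inner ℝ ws v : ℝ))
        = (1 / n) * ∑ i, deriv (ℓ i) (a i) * b i + lam * (inner ℝ ws v : ℝ) := by ring
    rw [h4] at h3
    exact h3.congr_of_eventuallyEq (Filter.Eventually.of_forall hgt)
  have hloc : IsLocalMin g 0 := by
    apply Filter.Eventually.of_forall
    intro t
    have h0 : g 0 = P ws := by rw [hg]; simp
    rw [h0]
    exact hmin _
  have hD : (1 / (n : ℝ)) * ∑ i, deriv (ℓ i) (a i) * b i + lam * (inner ℝ ws v : ℝ) = 0 := by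
    rw [← hgd.deriv]
    exact hloc.deriv_eq_zero
  -- key per-term inequality
  have hkey : ∀ i ∈ Finset.univ, (1 / Lt i) *
      (deriv (ℓ i) (a i + b i) - deriv (ℓ i) (a i)) ^ 2
      ≤ 2 * (ℓ i (a i + b i) - ℓ i (a i) - deriv (ℓ i) (a i) * b i) := by
    intro i _
    have := key1d (ℓ i) (Lt i) (hLt i) (hconv i) (hdiff i) (hlip i) (a i) (a i + b i)
    simpa using this
  have hsumle := Finset.sum_le_sum hkey
  have hnn : (0 : ℝ) ≤ 1 / n := by positivity
  have hvn : ‖v‖ = ‖w - ws‖ := by rw [hv]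
  have hnorm : ‖w‖ ^ 2 = ‖ws‖ ^ 2 + 2 * (inner ℝ ws v : ℝ) + ‖w - ws‖ ^ 2 := by
    conv_lhs => rw [← hwv]
    rw [norm_add_sq_real, hvn]
  calc (1 / (n : ℝ)) * ∑ i, (1 / Lt i) *
        (deriv (ℓ i) (inner ℝ (x i) w : ℝ) - deriv (ℓ i) (inner ℝ (x i) ws : ℝ)) ^ 2
      = (1 / (n : ℝ)) * ∑ i, (1 / Lt i) *
        (deriv (ℓ i) (a i + b i) - deriv (ℓ i) (a i)) ^ 2 := by
        congr 1; apply Finset.sum_congr rfl; intro i _; rw [hab i]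
    _ ≤ (1 / (n : ℝ)) * ∑ i, 2 * (ℓ i (a i + b i) - ℓ i (a i) - deriv (ℓ i) (a i) * b i) :=
        mul_le_mul_of_nonneg_left hsumle hnn
    _ = 2 * (P w - P ws - lam / 2 * ‖w - ws‖ ^ 2) := by
        rw [hP w, hP ws]
        simp only [hab]
        have esum : (∑ i, 2 * (ℓ i (a i + b i) - ℓ i (a i) - deriv (ℓ i) (a i) * b i))
            = 2 * ((∑ i, ℓ i (a i + b i)) - (∑ i, ℓ i (a i))
              - ∑ i, deriv (ℓ i) (a i) * b i) := by
          simp only [mul_sub, Finset.sum_sub_distrib, Finset.mul_sum]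
        rw [esum]
        linear_combination (-2 : ℝ) * hD - lam * hnorm
end

section
/- Let n ≥ 2, b an integer with 1 ≤ b ≤ n, and q ∈ ℝ^n with q_i ∈ (0,1) for all i and ∑_{i=1}^n q_i = b. Then there exists a probability distribution over subsets S ⊆ [n] such that (i) every S with positive probability has |S| = b, and (ii) for each i, the probability that i ∈ S equals q_i. -/
open Finset

lemma base_case {n : ℕ} (b : ℕ) (q : Fin n → ℝ)
    (hF : ∀ i, q i = 0 ∨ q i = 1)
    (hsum : ∑ i, q i = b) :
    ∃ P : Finset (Fin n) → ℝ,
      (∀ S, 0 ≤ P S) ∧ (∑ S : Finset (Fin n), P S = 1) ∧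
      (∀ S, 0 < P S → S.card = b) ∧
      (∀ i, ∑ S ∈ Finset.univ.filter (fun S : Finset (Fin n) => i ∈ S), P S = q i) := by
  classical
  set S0 : Finset (Fin n) := univ.filter (fun i => q i = 1) with hS0
  have hcard : (S0.card : ℝ) = b := by
    rw [← hsum, Finset.card_filter]
    push_cast
    refine Eq.symm (Finset.sum_congr rfl fun i _ => ?_)
    rcases hF i with h | h <;> simp [h]
  refine ⟨fun S => if S = S0 then 1 else 0, fun S => by dsimp only; split <;> norm_num, ?_, ?_, ?_⟩
  · simp
  · intro S hS
    dsimp only at hS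
    split at hS
    · next h => subst h; exact_mod_cast hcard
    · norm_num at hS
  · intro i
    rw [Finset.sum_ite_eq' _ S0 (fun _ => (1:ℝ))]
    rcases hF i with h | h
    · have hi : i ∉ S0 := by simp [hS0, h]
      simp [hi, h]
    · have hi : i ∈ S0 := by simp [hS0, h]
      simp [hi, h]

lemma aux_lemma {n : ℕ} (b : ℕ) : ∀ (m : ℕ) (q : Fin n → ℝ),
    (univ.filter (fun i => q i ∈ Set.Ioo (0:ℝ) 1)).card ≤ m →
    (∀ i, q i ∈ Set.Icc (0:ℝ) 1) → (∑ i, q i = b) →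
    ∃ P : Finset (Fin n) → ℝ,
      (∀ S, 0 ≤ P S) ∧ (∑ S : Finset (Fin n), P S = 1) ∧
      (∀ S, 0 < P S → S.card = b) ∧
      (∀ i, ∑ S ∈ Finset.univ.filter (fun S : Finset (Fin n) => i ∈ S), P S = q i) := by
  classical
  intro m
  induction m with
  | zero =>
    intro q hc hq hs
    refine base_case b q (fun i => ?_) hs
    rw [Nat.le_zero, Finset.card_eq_zero] at hc
    have hi : q i ∉ Set.Ioo (0:ℝ) 1 := by
      intro h
      have : i ∈ univ.filter (fun i => q i ∈ Set.Ioo (0:ℝ) 1) := by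
        simp only [Finset.mem_filter, Finset.mem_univ, true_and]; exact h
      rw [hc] at this
      exact absurd this (Finset.notMem_empty i)
    simp only [Set.mem_Ioo, not_and, not_lt] at hi
    rcases eq_or_lt_of_le (hq i).1 with h | h
    · exact Or.inl h.symm
    · exact Or.inr (le_antisymm (hq i).2 (hi h))
  | succ m ih =>
    intro q hc hq hs
    by_cases hall : ∀ i, q i = 0 ∨ q i = 1
    · exact base_case b q hall hs
    push_neg at hall
    obtain ⟨i, hi0, hi1⟩ := hall
    have hi : q i ∈ Set.Ioo (0:ℝ) 1 :=
      ⟨(hq i).1.lt_of_ne (Ne.symm hi0), (hq i).2.lt_of_ne hi1⟩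
    by_cases hj' : ∃ j, j ≠ i ∧ q j ∈ Set.Ioo (0:ℝ) 1
    swap
    · -- only one fractional coordinate: contradiction with integrality of the sum
      exfalso
      push_neg at hj'
      have hrest : ∀ k ∈ univ.erase i, q k = if q k = 1 then (1:ℝ) else 0 := by
        intro k hk
        have hki : k ≠ i := (Finset.mem_erase.mp hk).1
        have := hj' k hki
        simp only [Set.mem_Ioo, not_and, not_lt] at this
        rcases (hq k).1.eq_or_lt' with h | h
        · rw [if_neg (by simp [h]), ← h]
        · have h1 : q k = 1 := le_antisymm (hq k).2 (this h)
          rw [if_pos h1, h1]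
      have hsum' : ∑ k ∈ univ.erase i, q k =
          (((univ.erase i).filter (fun k => q k = 1)).card : ℝ) := by
        rw [Finset.sum_congr rfl hrest, Finset.sum_boole]
      set c := ((univ.erase i).filter (fun k => q k = 1)).card with hc'
      have htot : q i + ∑ k ∈ univ.erase i, q k = (b : ℝ) := by
        rw [Finset.add_sum_erase _ _ (Finset.mem_univ i), hs]
      rw [hsum'] at htot
      have h1 : (c : ℝ) < b := by nlinarith [hi.1]
      have h2 : (b : ℝ) < c + 1 := by nlinarith [hi.2]
      have h1' : c < b := by exact_mod_cast h1
      have h2' : b < c + 1 := by exact_mod_cast h2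
      omega
    obtain ⟨j, hji, hj⟩ := hj'
    set δ : ℝ := min (1 - q i) (q j) with hδdef
    set ε : ℝ := min (q i) (1 - q j) with hεdef
    have hδ : 0 < δ := lt_min (by linarith [hi.2]) hj.1
    have hε : 0 < ε := lt_min hi.1 (by linarith [hj.2])
    have hδi : δ ≤ 1 - q i := min_le_left _ _
    have hδj : δ ≤ q j := min_le_right _ _
    have hεi : ε ≤ q i := min_le_left _ _
    have hεj : ε ≤ 1 - q j := min_le_right _ _
    set q1 : Fin n → ℝ := fun k => if k = i then q i + δ else if k = j then q j - δ else q k with hq1def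
    set q2 : Fin n → ℝ := fun k => if k = i then q i - ε else if k = j then q j + ε else q k with hq2def
    have hq1i : q1 i = q i + δ := by simp [hq1def]
    have hq1j : q1 j = q j - δ := by simp [hq1def, hji]
    have hq2i : q2 i = q i - ε := by simp [hq2def]
    have hq2j : q2 j = q j + ε := by simp [hq2def, hji]
    have hq1o : ∀ k, k ≠ i → k ≠ j → q1 k = q k := by
      intro k h1 h2; simp [hq1def, h1, h2]
    have hq2o : ∀ k, k ≠ i → k ≠ j → q2 k = q k := by
      intro k h1 h2; simp [hq2def, h1, h2]
    -- bounds
    have hq1b : ∀ k, q1 k ∈ Set.Icc (0:ℝ) 1 := by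
      intro k
      rcases eq_or_ne k i with rfl | h1
      · rw [hq1i]; constructor <;> [linarith [hi.1]; linarith]
      rcases eq_or_ne k j with rfl | h2
      · rw [hq1j]; constructor <;> [linarith; linarith [hj.2]]
      · rw [hq1o k h1 h2]; exact hq k
    have hq2b : ∀ k, q2 k ∈ Set.Icc (0:ℝ) 1 := by
      intro k
      rcases eq_or_ne k i with rfl | h1
      · rw [hq2i]; constructor <;> [linarith; linarith [hi.2]]
      rcases eq_or_ne k j with rfl | h2
      · rw [hq2j]; constructor <;> [linarith [hj.1]; linarith]
      · rw [hq2o k h1 h2]; exact hq k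
    -- sums
    have hsum_diff : ∀ (r : Fin n → ℝ), (∀ k, k ≠ i → k ≠ j → r k = q k) →
        r i + r j = q i + q j → ∑ k, r k = (b : ℝ) := by
      intro r hro hrij
      have key : ∑ k ∈ ({i, j} : Finset (Fin n)), (r k - q k) =
          ∑ k, (r k - q k) := by
        refine Finset.sum_subset (Finset.subset_univ _) ?_
        intro k _ hk
        simp only [Finset.mem_insert, Finset.mem_singleton] at hk
        push_neg at hk
        rw [hro k hk.1 hk.2, sub_self]
      rw [Finset.sum_pair hji.symm] at key
      have : ∑ k, (r k - q k) = 0 := by rw [← key]; linarith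
      rw [Finset.sum_sub_distrib] at this
      rw [← hs]; linarith
    have hs1 : ∑ k, q1 k = (b : ℝ) := by
      refine hsum_diff q1 hq1o ?_
      rw [hq1i, hq1j]; ring
    have hs2 : ∑ k, q2 k = (b : ℝ) := by
      refine hsum_diff q2 hq2o ?_
      rw [hq2i, hq2j]; ring
    -- fractional sets shrink
    have hsub : ∀ (r : Fin n → ℝ), (∀ k, k ≠ i → k ≠ j → r k = q k) →
        (univ.filter (fun k => r k ∈ Set.Ioo (0:ℝ) 1)) ⊆
        (univ.filter (fun k => q k ∈ Set.Ioo (0:ℝ) 1)) := by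
      intro r hro k hk
      simp only [Finset.mem_filter, Finset.mem_univ, true_and] at hk ⊢
      rcases eq_or_ne k i with rfl | h1
      · exact hi
      rcases eq_or_ne k j with rfl | h2
      · exact hj
      · rwa [hro k h1 h2] at hk
    have hcard_aux : ∀ (r : Fin n → ℝ), (∀ k, k ≠ i → k ≠ j → r k = q k) →
        (∃ k₀, (q k₀ ∈ Set.Ioo (0:ℝ) 1) ∧ (r k₀ ∉ Set.Ioo (0:ℝ) 1)) →
        (univ.filter (fun k => r k ∈ Set.Ioo (0:ℝ) 1)).card ≤ m := by
      rintro r hro ⟨k₀, hk₀q, hk₀r⟩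
      have hss : (univ.filter (fun k => r k ∈ Set.Ioo (0:ℝ) 1)) ⊂
          (univ.filter (fun k => q k ∈ Set.Ioo (0:ℝ) 1)) := by
        refine Finset.ssubset_iff_of_subset (hsub r hro) |>.mpr ?_
        refine ⟨k₀, ?_, ?_⟩
        · simp only [Finset.mem_filter, Finset.mem_univ, true_and]; exact hk₀q
        · simp only [Finset.mem_filter, Finset.mem_univ, true_and]; exact hk₀r
      have := Finset.card_lt_card hss
      omega
    have hc1 : (univ.filter (fun k => q1 k ∈ Set.Ioo (0:ℝ) 1)).card ≤ m := by
      refine hcard_aux q1 hq1o ?_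
      rcases min_cases (1 - q i) (q j) with ⟨he, _⟩ | ⟨he, _⟩
      · refine ⟨i, hi, ?_⟩
        rw [hq1i, hδdef, he]
        intro hmem; exact absurd hmem.2 (by linarith)
      · refine ⟨j, hj, ?_⟩
        rw [hq1j, hδdef, he]
        intro hmem; exact absurd hmem.1 (by linarith)
    have hc2 : (univ.filter (fun k => q2 k ∈ Set.Ioo (0:ℝ) 1)).card ≤ m := by
      refine hcard_aux q2 hq2o ?_
      rcases min_cases (q i) (1 - q j) with ⟨he, _⟩ | ⟨he, _⟩
      · refine ⟨i, hi, ?_⟩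
        rw [hq2i, hεdef, he]
        intro hmem; exact absurd hmem.1 (by linarith)
      · refine ⟨j, hj, ?_⟩
        rw [hq2j, hεdef, he]
        intro hmem; exact absurd hmem.2 (by linarith)
    obtain ⟨P1, hP1n, hP1s, hP1c, hP1m⟩ := ih q1 hc1 hq1b hs1
    obtain ⟨P2, hP2n, hP2s, hP2c, hP2m⟩ := ih q2 hc2 hq2b hs2
    set t : ℝ := ε / (δ + ε) with htdef
    have hde : δ + ε ≠ 0 := by positivity
    have ht0 : 0 ≤ t := by positivity
    have ht1 : t ≤ 1 := by
      rw [htdef, div_le_one (by positivity)]; linarith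
    have hconv : ∀ k, t * q1 k + (1 - t) * q2 k = q k := by
      intro k
      rcases eq_or_ne k i with rfl | h1
      · rw [hq1i, hq2i, htdef]; field_simp; ring
      rcases eq_or_ne k j with rfl | h2
      · rw [hq1j, hq2j, htdef]; field_simp; ring
      · rw [hq1o k h1 h2, hq2o k h1 h2]; ring
    refine ⟨fun S => t * P1 S + (1 - t) * P2 S, ?_, ?_, ?_, ?_⟩
    · intro S
      dsimp only
      have h1 := mul_nonneg ht0 (hP1n S)
      have h2 := mul_nonneg (by linarith : (0:ℝ) ≤ 1 - t) (hP2n S)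
      linarith
    · rw [Finset.sum_add_distrib, ← Finset.mul_sum, ← Finset.mul_sum, hP1s, hP2s]
      ring
    · intro S hS
      by_cases h1 : 0 < P1 S
      · exact hP1c S h1
      by_cases h2 : 0 < P2 S
      · exact hP2c S h2
      exfalso
      have e1 : P1 S = 0 := le_antisymm (not_lt.mp h1) (hP1n S)
      have e2 : P2 S = 0 := le_antisymm (not_lt.mp h2) (hP2n S)
      dsimp only at hS
      rw [e1, e2] at hS
      simp at hS
    · intro k
      dsimp only
      rw [Finset.sum_add_distrib, ← Finset.mul_sum, ← Finset.mul_sum, hP1m, hP2m]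
      exact hconv k

theorem stmt14 (n b : ℕ) (hn : 2 ≤ n) (hb1 : 1 ≤ b) (hbn : b ≤ n)
    (q : Fin n → ℝ) (hq : ∀ i, q i ∈ Set.Ioo (0 : ℝ) 1) (hsum : ∑ i, q i = b) :
    ∃ P : Finset (Fin n) → ℝ,
      (∀ S, 0 ≤ P S) ∧ (∑ S : Finset (Fin n), P S = 1) ∧
      (∀ S, 0 < P S → S.card = b) ∧
      (∀ i, ∑ S ∈ Finset.univ.filter (fun S : Finset (Fin n) => i ∈ S), P S = q i) := by
  refine aux_lemma b n q ?_ (fun i => Set.Ioo_subset_Icc_self (hq i)) hsum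
  calc (univ.filter (fun i => q i ∈ Set.Ioo (0:ℝ) 1)).card
      ≤ (univ : Finset (Fin n)).card := Finset.card_filter_le _ _
    _ = n := by simp
end

section
/- Let n ≥ 1, x_i ∈ ℝ^d with Q = (1/n)∑ ‖x_i‖², λ > 0, γ > 0, and κ ∈ ℝ^n not identically zero. With p* the optimal adaptive probabilities p*_i ∝ √(nλ² + ‖x_i‖² γ)|κ_i| on the support of κ, the expected squared update satisfies ∑_i p*_i ‖(1/(n p*_i)) κ_i x_i‖² ≤ Q(1 + γQ/(nλ²)) ‖κ‖². -/
open Finset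

set_option maxHeartbeats 1000000

theorem stmt18 (n d : ℕ) (hn : 1 ≤ n) (lam γ : ℝ) (hlam : 0 < lam) (hγ : 0 < γ)
    (x : Fin n → EuclideanSpace ℝ (Fin d)) (κ : Fin n → ℝ) (hκ : ∃ j, κ j ≠ 0)
    (Q : ℝ) (hQ : Q = (1 / n) * ∑ i, ‖x i‖ ^ 2)
    (ps : Fin n → ℝ)
    (hps : ∀ i, ps i = Real.sqrt (n * lam ^ 2 + ‖x i‖ ^ 2 * γ) * |κ i| /
        ∑ j, Real.sqrt (n * lam ^ 2 + ‖x j‖ ^ 2 * γ) * |κ j|) :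
    ∑ i, ps i * ‖(1 / (n * ps i)) • (κ i • x i)‖ ^ 2
      ≤ Q * (1 + γ * Q / (n * lam ^ 2)) * ∑ i, κ i ^ 2 := by
  have hn' : (1:ℝ) ≤ n := by exact_mod_cast hn
  have hnpos : (0:ℝ) < n := by linarith
  set s : Fin n → ℝ := fun i => Real.sqrt (n * lam ^ 2 + ‖x i‖ ^ 2 * γ) with hs
  have hbase : ∀ i, 0 < n * lam ^ 2 + ‖x i‖ ^ 2 * γ := fun i => by positivity
  have hspos : ∀ i, 0 < s i := fun i => Real.sqrt_pos.mpr (hbase i)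
  have hs2 : ∀ i, s i ^ 2 = n * lam ^ 2 + ‖x i‖ ^ 2 * γ := fun i =>
    Real.sq_sqrt (hbase i).le
  set S : ℝ := ∑ j, s j * |κ j| with hSdef
  have hSpos : 0 < S := by
    obtain ⟨j, hj⟩ := hκ
    exact Finset.sum_pos' (fun i _ => by positivity)
      ⟨j, Finset.mem_univ j, mul_pos (hspos j) (abs_pos.mpr hj)⟩
  have hxQ : ∑ i, ‖x i‖ ^ 2 = n * Q := by rw [hQ]; field_simp
  have hQ0 : 0 ≤ Q := by
    rw [hQ]; positivity
  set K : ℝ := Real.sqrt (∑ j, κ j ^ 2) with hK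
  have hK0 : 0 ≤ K := Real.sqrt_nonneg _
  have hK2 : K ^ 2 = ∑ j, κ j ^ 2 :=
    Real.sq_sqrt (Finset.sum_nonneg fun i _ => sq_nonneg _)
  set A : ℝ := Real.sqrt (n ^ 2 * lam ^ 2 + γ * n * Q) with hA
  have hA0 : 0 ≤ A := Real.sqrt_nonneg _
  have hA2 : A ^ 2 = n ^ 2 * lam ^ 2 + γ * n * Q := Real.sq_sqrt (by positivity)
  -- Cauchy–Schwarz : S ≤ A * K
  have hs2sum : ∑ j, s j ^ 2 = n ^ 2 * lam ^ 2 + γ * n * Q := by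
    simp only [hs2]
    rw [Finset.sum_add_distrib, Finset.sum_const, Finset.card_univ, Fintype.card_fin,
      ← Finset.sum_mul, hxQ]
    ring
  have hSle : S ≤ A * K := by
    have hcs : S ^ 2 ≤ (∑ j, s j ^ 2) * (∑ j, |κ j| ^ 2) :=
      Finset.sum_mul_sq_le_sq_mul_sq _ _ _
    have habs : ∑ j, |κ j| ^ 2 = ∑ j, κ j ^ 2 := by simp [sq_abs]
    refine le_of_pow_le_pow_left₀ two_ne_zero (by positivity) ?_
    calc S ^ 2 ≤ (∑ j, s j ^ 2) * (∑ j, |κ j| ^ 2) := hcs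
      _ = (A * K) ^ 2 := by rw [habs, hs2sum, mul_pow, hA2, hK2]
  have hslow : ∀ i, Real.sqrt n * lam ≤ s i := by
    intro i
    have h1 : Real.sqrt (n * lam ^ 2) ≤ s i :=
      Real.sqrt_le_sqrt (by nlinarith [sq_nonneg ‖x i‖])
    rwa [Real.sqrt_mul hnpos.le, Real.sqrt_sq hlam.le] at h1
  have hsqn : (0:ℝ) < Real.sqrt n := Real.sqrt_pos.mpr hnpos
  -- per-term identity
  have hterm : ∀ i, ps i * ‖(1 / (n * ps i)) • (κ i • x i)‖ ^ 2
      = S / (n ^ 2 * s i) * (|κ i| * ‖x i‖ ^ 2) := by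
    intro i
    by_cases hki : κ i = 0
    · simp [hps i, hki]
    · have hka : 0 < |κ i| := abs_pos.mpr hki
      have hpsi : ps i = s i * |κ i| / S := hps i
      have hpspos : 0 < ps i := hpsi ▸ div_pos (mul_pos (hspos i) hka) hSpos
      have key : ∀ a k X N SS : ℝ, 0 < a → 0 < k → 0 < SS → 0 < N →
          a * k / SS * (1 / (N * (a * k / SS)) * (k * X)) ^ 2
            = SS / (N ^ 2 * a) * (k * X ^ 2) := by
        intro a k X N SS ha hk hSS hN
        field_simp
      rw [norm_smul, norm_smul, Real.norm_eq_abs, Real.norm_eq_abs,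
        abs_of_pos (by positivity : (0:ℝ) < 1 / (n * ps i)), hpsi]
      exact key (s i) (|κ i|) (‖x i‖) n S (hspos i) hka hSpos hnpos
  -- sum bound : ∑ |κ i| * ‖x i‖^2 ≤ K * (n*Q)
  have hsum2 : ∑ i, |κ i| * ‖x i‖ ^ 2 ≤ K * (n * Q) := by
    have hcs : (∑ i, |κ i| * ‖x i‖ ^ 2) ^ 2
        ≤ (∑ i, |κ i| ^ 2) * (∑ i, (‖x i‖ ^ 2) ^ 2) :=
      Finset.sum_mul_sq_le_sq_mul_sq _ _ _
    have h4 : ∑ i, (‖x i‖ ^ 2) ^ 2 ≤ (∑ i, ‖x i‖ ^ 2) ^ 2 :=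
      Finset.sum_sq_le_sq_sum_of_nonneg (fun i _ => sq_nonneg _)
    have habs : ∑ j, |κ j| ^ 2 = ∑ j, κ j ^ 2 := by simp [sq_abs]
    refine le_of_pow_le_pow_left₀ two_ne_zero (by positivity) ?_
    calc (∑ i, |κ i| * ‖x i‖ ^ 2) ^ 2
        ≤ (∑ i, |κ i| ^ 2) * (∑ i, (‖x i‖ ^ 2) ^ 2) := hcs
      _ ≤ (∑ i, κ i ^ 2) * (∑ i, ‖x i‖ ^ 2) ^ 2 := by
          rw [habs]
          exact mul_le_mul_of_nonneg_left h4 (Finset.sum_nonneg fun i _ => sq_nonneg _)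
      _ = (K * (n * Q)) ^ 2 := by rw [hxQ, ← hK2]; ring
  -- bound A
  set t : ℝ := γ * Q / (n * lam ^ 2) with ht
  have ht0 : 0 ≤ t := by positivity
  have htq : γ * Q = n * lam ^ 2 * t := by
    rw [ht]; field_simp
  have hAle : A ≤ n * Real.sqrt n * lam * (1 + t) := by
    refine le_of_pow_le_pow_left₀ two_ne_zero (by positivity) ?_
    have hsq : Real.sqrt n ^ 2 = n := Real.sq_sqrt hnpos.le
    rw [hA2]
    have h1 : γ * n * Q = n ^ 2 * lam ^ 2 * t := by linear_combination (n:ℝ) * htq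
    rw [h1]
    have hexp : (n * Real.sqrt n * lam * (1 + t)) ^ 2
        = n ^ 2 * n * lam ^ 2 * (1 + t) ^ 2 := by
      rw [mul_pow, mul_pow, mul_pow, hsq]
    rw [hexp]
    have h1t : (1:ℝ) ≤ 1 + t := by linarith
    have h2 : (1 + t) ≤ n * (1 + t) ^ 2 := by nlinarith
    nlinarith [mul_le_mul_of_nonneg_left h2 (show (0:ℝ) ≤ (n:ℝ) ^ 2 * lam ^ 2 by positivity)]
  -- main chain
  calc ∑ i, ps i * ‖(1 / (n * ps i)) • (κ i • x i)‖ ^ 2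
      = ∑ i, S / (n ^ 2 * s i) * (|κ i| * ‖x i‖ ^ 2) :=
        Finset.sum_congr rfl fun i _ => hterm i
    _ ≤ ∑ i, A * K / (n ^ 2 * (Real.sqrt n * lam)) * (|κ i| * ‖x i‖ ^ 2) := by
        refine Finset.sum_le_sum fun i _ => ?_
        refine mul_le_mul_of_nonneg_right ?_ (by positivity)
        exact div_le_div₀ (by positivity) hSle (by positivity)
          (mul_le_mul_of_nonneg_left (hslow i) (by positivity))
    _ = A * K / (n ^ 2 * (Real.sqrt n * lam)) * ∑ i, |κ i| * ‖x i‖ ^ 2 := by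
        rw [← Finset.mul_sum]
    _ ≤ A * K / (n ^ 2 * (Real.sqrt n * lam)) * (K * (n * Q)) :=
        mul_le_mul_of_nonneg_left hsum2 (by positivity)
    _ ≤ (n * Real.sqrt n * lam * (1 + t)) * K / (n ^ 2 * (Real.sqrt n * lam)) * (K * (n * Q)) := by
        gcongr
    _ = Q * (1 + t) * K ^ 2 := by
        field_simp
    _ = Q * (1 + γ * Q / (n * lam ^ 2)) * ∑ i, κ i ^ 2 := by rw [hK2, ht]
end
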